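/- arXiv:1910.02937 — 4 statements merged into one kernel-verified Lean document; each statement's English description precedes it below -/
import Mathlib

section
/- Let m ≥ 1, let W ⊆ ℝ^m be a linear subspace, let τ̃ ∈ ℝ^m, and let Φ : ℝ^m → ℝ^m be a linear map satisfying Φ τ̃ = 0 and Φ w = w for every w ∈ W. Let p ≥ 0, Δt > 0, and suppose Ũ, Ẽ ∈ ℝ^m satisfy: (i) there exists w ∈ W with ‖Ũ − w‖ ≤ C₁·Δt^{p+2}; (ii) Ẽ = α·Δt^{p+1}·τ̃ + r with ‖r‖ ≤ C₂·Δt^{p+2} for some real α. Then ‖Φ(Ũ + Ẽ) − Ũ‖ ≤ ((1 + ‖Φ‖)·C₁ + ‖Φ‖·C₂)·Δt^{p+2}, where ‖Φ‖ is the operator norm. In particular, the post-processed numerical solution Φ(Ũ + Ẽ) approximates Ũ to order Δt^{p+2}. -/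
/-!
The filter `Φ` kills the leading error term `c • τ` and reproduces the polynomial part `w ∈ W`
of the exact solution `u`, so `Φ (u + c • τ + r) - u = (Φ - 1) (u - w) + Φ r`: only the
distance of `u` to `W` and the higher-order remainder `r` survive, each amplified by at most
`‖Φ - 1‖ ≤ 1 + ‖Φ‖` resp. `‖Φ‖`.
-/

namespace ContinuousLinearMap

variable {𝕜 E : Type*} [NontriviallyNormedField 𝕜] [SeminormedAddCommGroup E] [NormedSpace 𝕜 E]

theorem norm_sub_one_le (Φ : E →L[𝕜] E) : ‖Φ - 1‖ ≤ 1 + ‖Φ‖ :=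
  calc ‖Φ - 1‖ ≤ ‖Φ‖ + ‖(1 : E →L[𝕜] E)‖ := norm_sub_le _ _
    _ ≤ 1 + ‖Φ‖ := by rw [add_comm, one_def]; gcongr; exact norm_id_le

theorem apply_add_smul_add_sub_eq {Φ : E →L[𝕜] E} {τ w : E} (hτ : Φ τ = 0) (hw : Φ w = w)
    (c : 𝕜) (u r : E) : Φ (u + (c • τ + r)) - u = (Φ - 1) (u - w) + Φ r := by
  simp only [map_add, map_smul, hτ, smul_zero, zero_add, sub_apply, one_def, id_apply, map_sub, hw]
  abel

theorem norm_apply_add_smul_add_sub_le {Φ : E →L[𝕜] E} {τ w : E} (hτ : Φ τ = 0)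
    (hw : Φ w = w) (c : 𝕜) (u r : E) :
    ‖Φ (u + (c • τ + r)) - u‖ ≤ (1 + ‖Φ‖) * ‖u - w‖ + ‖Φ‖ * ‖r‖ :=
  calc ‖Φ (u + (c • τ + r)) - u‖ = ‖(Φ - 1) (u - w) + Φ r‖ := by
        rw [apply_add_smul_add_sub_eq hτ hw]
    _ ≤ ‖Φ - 1‖ * ‖u - w‖ + ‖Φ‖ * ‖r‖ :=
        norm_add_le_of_le ((Φ - 1).le_opNorm _) (Φ.le_opNorm _)
    _ ≤ (1 + ‖Φ‖) * ‖u - w‖ + ‖Φ‖ * ‖r‖ := by gcongr; exact Φ.norm_sub_one_le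

end ContinuousLinearMap

theorem postprocessing_estimate_general (m : ℕ)
    (W : Submodule ℝ (Fin m → ℝ)) (τ : Fin m → ℝ)
    (Φ : (Fin m → ℝ) →L[ℝ] (Fin m → ℝ))
    (hτ : Φ τ = 0) (hW : ∀ w ∈ W, Φ w = w)
    (p : ℕ) (Δt : ℝ)
    (Ut Et : Fin m → ℝ) (C₁ C₂ α : ℝ)
    (h1 : ∃ w ∈ W, ‖Ut - w‖ ≤ C₁ * Δt ^ (p + 2))
    (h2 : ∃ r : Fin m → ℝ, Et = (α * Δt ^ (p + 1)) • τ + r ∧ ‖r‖ ≤ C₂ * Δt ^ (p + 2)) :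
    ‖Φ (Ut + Et) - Ut‖ ≤ ((1 + ‖Φ‖) * C₁ + ‖Φ‖ * C₂) * Δt ^ (p + 2) := by
  obtain ⟨w, hwW, hw⟩ := h1
  obtain ⟨r, rfl, hr⟩ := h2
  calc ‖Φ (Ut + ((α * Δt ^ (p + 1)) • τ + r)) - Ut‖
      ≤ (1 + ‖Φ‖) * ‖Ut - w‖ + ‖Φ‖ * ‖r‖ :=
        Φ.norm_apply_add_smul_add_sub_le hτ (hW w hwW) _ Ut r
    _ ≤ (1 + ‖Φ‖) * (C₁ * Δt ^ (p + 2)) + ‖Φ‖ * (C₂ * Δt ^ (p + 2)) := by gcongr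
    _ = ((1 + ‖Φ‖) * C₁ + ‖Φ‖ * C₂) * Δt ^ (p + 2) := by ring

/-- **Post-processing estimate (equations (3.24)–(3.27)).**
If the filter `Φ` annihilates the concatenated truncation direction `τ̃` and fixes every
element of the subspace `W` (the projected polynomials of degree ≤ p+1), the exact solution
vector `Ut` is within `C₁Δt^{p+2}` of `W`, and the error `Et` is a multiple of `Δt^{p+1}τ̃`
up to an `O(Δt^{p+2})` remainder, then the post-processed numerical solution satisfies
`‖Φ(Ut + Et) - Ut‖ ≤ ((1 + ‖Φ‖)C₁ + ‖Φ‖C₂)·Δt^{p+2}`. -/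
theorem postprocessing_estimate (m : ℕ) (hm : 1 ≤ m)
    (W : Submodule ℝ (Fin m → ℝ)) (τ : Fin m → ℝ)
    (Φ : (Fin m → ℝ) →L[ℝ] (Fin m → ℝ))
    (hτ : Φ τ = 0) (hW : ∀ w ∈ W, Φ w = w)
    (p : ℕ) (Δt : ℝ) (hΔt : 0 < Δt)
    (Ut Et : Fin m → ℝ) (C₁ C₂ α : ℝ)
    (h1 : ∃ w ∈ W, ‖Ut - w‖ ≤ C₁ * Δt ^ (p + 2))
    (h2 : ∃ r : Fin m → ℝ, Et = (α * Δt ^ (p + 1)) • τ + r ∧ ‖r‖ ≤ C₂ * Δt ^ (p + 2)) :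
    ‖Φ (Ut + Et) - Ut‖ ≤ ((1 + ‖Φ‖) * C₁ + ‖Φ‖ * C₂) * Δt ^ (p + 2) :=
  postprocessing_estimate_general m W τ Φ hτ hW p Δt Ut Et C₁ C₂ α h1 h2
end

section
/- Let s ≥ 1, let D, A, R be s×s real matrices and v₁, v₂ ∈ ℝ^s, and assume D² = D, D v₁ = 0, D v₂ = 0, and D(A + R)v₁ = 0. For real numbers h, f₁, f₂, α, β define the matrices Q_i = D + h·f_i·(R D + A) for i = 1,2, and the vector w = α v₁ + h(β v₂ + α f₁ R v₁). Then, writing w₁ = β v₂ + α f₁ R v₁, the exact identity Q₂ Q₁ w = h²·[ (f₂ (RD + A) D + f₁ D (RD + A)) w₁ + α f₁ f₂ (RD + A)² v₁ ] + h³· f₁ f₂ (RD + A)² w₁ holds; in particular the coefficients of h⁰ and h¹ in the expansion of Q₂ Q₁ w vanish, so Q₂ Q₁ w = O(h²) as h → 0. -/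
/-!
Write `B = R D + A` and `w₁ = β v₂ + α f₁ R v₁`. Since `D` kills `v₁` and `v₂`, the first
factor gives `Q₁ w = h α f₁ (D R + A) v₁ + h² f₁ B w₁`, and the EIS+ condition together with
`D² = D` says exactly that `D` kills `(D R + A) v₁ = D (R v₁) + A v₁`. Hence the `O(1)` part of
`Q₂` only meets the `h²` term, and every surviving contribution carries a factor `h²`.
-/

open Matrix

namespace Matrix

variable {n K : Type*} [Fintype n] [CommRing K]

theorem mulVec_mulVec_of_mul_self_eq {D : Matrix n n K} (hD : D * D = D) (x : n → K) :
    D *ᵥ (D *ᵥ x) = D *ᵥ x := by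
  rw [mulVec_mulVec, hD]

theorem mulVec_mul_add_mulVec_eq_zero {D A R : Matrix n n K} {v : n → K} (hD : D * D = D)
    (hv : D *ᵥ ((A + R) *ᵥ v) = 0) : D *ᵥ ((D * R + A) *ᵥ v) = 0 := by
  have hDR : D *ᵥ (D *ᵥ (R *ᵥ v)) = D *ᵥ (R *ᵥ v) := mulVec_mulVec_of_mul_self_eq hD _
  simp only [add_mulVec, mulVec_add, ← mulVec_mulVec, hDR] at hv ⊢
  rw [add_comm, hv]

theorem mul_add_mulVec_of_mulVec_eq_zero {D A R : Matrix n n K} {v : n → K}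
    (hv : D *ᵥ v = 0) : (R * D + A) *ᵥ v = A *ᵥ v := by
  rw [add_mulVec, ← mulVec_mulVec, hv, mulVec_zero, zero_add]

theorem mulVec_damping_initial {D A R : Matrix n n K} {v₁ v₂ : n → K}
    (h1 : D *ᵥ v₁ = 0) (h2 : D *ᵥ v₂ = 0) (h f α β : K) :
    (D + (h * f) • (R * D + A)) *ᵥ (α • v₁ + h • (β • v₂ + (α * f) • R *ᵥ v₁))
      = (h * α * f) • ((D * R + A) *ᵥ v₁)
        + (h ^ 2 * f) • ((R * D + A) *ᵥ (β • v₂ + (α * f) • R *ᵥ v₁)) := by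
  simp only [add_mulVec, mulVec_add, smul_mulVec, mulVec_smul,
    mul_add_mulVec_of_mulVec_eq_zero h1, h1, h2, ← mulVec_mulVec]
  module

theorem mulVec_damping_of_mulVec_eq_zero {D B : Matrix n n K} {u : n → K}
    (hu : D *ᵥ u = 0) (h f₁ f₂ c : K) (w : n → K) :
    (D + (h * f₂) • B) *ᵥ ((h * c) • u + (h ^ 2 * f₁) • (B *ᵥ w))
      = h ^ 2 • (f₁ • (D * B) *ᵥ w + (c * f₂) • (B *ᵥ u))
        + h ^ 3 • ((f₁ * f₂) • (B * B) *ᵥ w) := by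
  simp only [add_mulVec, mulVec_add, smul_mulVec, mulVec_smul, ← mulVec_mulVec, hu]
  module

end Matrix

theorem EIS_double_damping_identity_general (s : ℕ)
    (D A R : Matrix (Fin s) (Fin s) ℝ) (v₁ v₂ : Fin s → ℝ)
    (hD : D * D = D) (h1 : D.mulVec v₁ = 0) (h2 : D.mulVec v₂ = 0)
    (h3 : D.mulVec ((A + R).mulVec v₁) = 0)
    (h f₁ f₂ α β : ℝ) :
    (D + (h * f₂) • (R * D + A)).mulVec
        ((D + (h * f₁) • (R * D + A)).mulVec
          (α • v₁ + h • (β • v₂ + (α * f₁) • R.mulVec v₁)))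
      = h ^ 2 • ((f₂ • ((R * D + A) * D) + f₁ • (D * (R * D + A))).mulVec
              (β • v₂ + (α * f₁) • R.mulVec v₁)
            + (α * f₁ * f₂) • ((R * D + A) * (R * D + A)).mulVec v₁)
        + h ^ 3 • ((f₁ * f₂) • ((R * D + A) * (R * D + A)).mulVec
              (β • v₂ + (α * f₁) • R.mulVec v₁)) := by
  rw [mulVec_damping_initial h1 h2, mul_assoc h,
    mulVec_damping_of_mulVec_eq_zero (mulVec_mul_add_mulVec_eq_zero hD h3)]
  have hBu : (R * D + A) *ᵥ ((D * R + A) *ᵥ v₁)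
      = (R * D + A) *ᵥ (D *ᵥ (R *ᵥ v₁)) + ((R * D + A) * (R * D + A)) *ᵥ v₁ := by
    rw [← mulVec_mulVec v₁ (R * D + A), mul_add_mulVec_of_mulVec_eq_zero h1,
      add_mulVec (D * R) A, ← mulVec_mulVec v₁ D, mulVec_add]
  have hBDw₁ : ((R * D + A) * D) *ᵥ (β • v₂ + (α * f₁) • R *ᵥ v₁)
      = (α * f₁) • ((R * D + A) *ᵥ (D *ᵥ (R *ᵥ v₁))) := by
    rw [← mulVec_mulVec, mulVec_add, mulVec_smul, mulVec_smul, h2, smul_zero, zero_add,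
      mulVec_smul]
  rw [hBu, add_mulVec (f₂ • _), smul_mulVec f₂, smul_mulVec f₁, hBDw₁]
  module

/-- **Algebraic core of the Appendix A error analysis.**
If `D² = D`, `Dv₁ = 0`, `Dv₂ = 0` and `D(A+R)v₁ = 0` (the EIS+ conditions), then with
`B = RD + A`, `Qᵢ = D + h fᵢ B`, `w₁ = β v₂ + α f₁ R v₁` and `w = α v₁ + h w₁`, the exact
identity
`Q₂ Q₁ w = h²·[(f₂ BD + f₁ DB)w₁ + α f₁ f₂ B² v₁] + h³·f₁ f₂ B² w₁`
holds; in particular the coefficients of `h⁰` and `h¹` vanish, so `Q₂Q₁w = O(h²)`. -/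
theorem EIS_double_damping_identity (s : ℕ) (hs : 1 ≤ s)
    (D A R : Matrix (Fin s) (Fin s) ℝ) (v₁ v₂ : Fin s → ℝ)
    (hD : D * D = D) (h1 : D.mulVec v₁ = 0) (h2 : D.mulVec v₂ = 0)
    (h3 : D.mulVec ((A + R).mulVec v₁) = 0)
    (h f₁ f₂ α β : ℝ) :
    (D + (h * f₂) • (R * D + A)).mulVec
        ((D + (h * f₁) • (R * D + A)).mulVec
          (α • v₁ + h • (β • v₂ + (α * f₁) • R.mulVec v₁)))
      = h ^ 2 • ((f₂ • ((R * D + A) * D) + f₁ • (D * (R * D + A))).mulVec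
              (β • v₂ + (α * f₁) • R.mulVec v₁)
            + (α * f₁ * f₂) • ((R * D + A) * (R * D + A)).mulVec v₁)
        + h ^ 3 • ((f₁ * f₂) • ((R * D + A) * (R * D + A)).mulVec
              (β • v₂ + (α * f₁) • R.mulVec v₁)) :=
  EIS_double_damping_identity_general s D A R v₁ v₂ hD h1 h2 h3 h f₁ f₂ α β
end

section
/- Let s = 2, with coefficient matrices D = [[2,−1],[2,−1]], A = (1/12)·[[13,−14],[16,−24]], R = (1/12)·[[19,0],[24,8]], and abscissas c = (−1/2, 0)ᵀ (the A-stable implicit method iEIS+(2,3)). Then the truncation error vectors of this method satisfy: τ₀ = 0, τ₁ = 0 (order conditions with p = 1), the EIS+ conditions D τ₂ = 0, D τ₃ = 0, and D(A + R) τ₂ = 0; moreover τ₂ = (3/8, 3/4)ᵀ. -/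
/-- The truncation error vectors of the general linear method with coefficient matrices
`D, A, R` and abscissas `c`:
`τ₀ = (I - D)𝟙` and, for `j ≥ 1`,
`τ_j = (1/(j-1)!)·((1/j)·D(c-𝟙)^j + A(c-𝟙)^(j-1) + R c^(j-1) - (1/j)·c^j)`
(powers of vectors taken componentwise). -/
noncomputable def tauVec (s : ℕ) (D A R : Matrix (Fin s) (Fin s) ℝ) (c : Fin s → ℝ) :
    ℕ → (Fin s → ℝ)
  | 0 => ((fun _ => (1 : ℝ)) : Fin s → ℝ) - D.mulVec ((fun _ => (1 : ℝ)) : Fin s → ℝ)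
  | (j + 1) => (1 / (Nat.factorial j : ℝ)) •
      ((1 / ((j : ℝ) + 1)) • D.mulVec (fun i => (c i - 1) ^ (j + 1))
        + A.mulVec (fun i => (c i - 1) ^ j)
        + R.mulVec (fun i => c i ^ j)
        - (1 / ((j : ℝ) + 1)) • (fun i => c i ^ (j + 1)))

/-- Coefficient matrix `D` of the A-stable implicit method iEIS+(2,3). -/
def Di23 : Matrix (Fin 2) (Fin 2) ℝ := !![2, -1; 2, -1]

/-- Coefficient matrix `A` of the A-stable implicit method iEIS+(2,3). -/
noncomputable def Ai23 : Matrix (Fin 2) (Fin 2) ℝ := (1 / 12 : ℝ) • !![13, -14; 16, -24]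

/-- Coefficient matrix `R` of the A-stable implicit method iEIS+(2,3). -/
noncomputable def Ri23 : Matrix (Fin 2) (Fin 2) ℝ := (1 / 12 : ℝ) • !![19, 0; 24, 8]

/-- Abscissas of the A-stable implicit method iEIS+(2,3). -/
noncomputable def ci23 : Fin 2 → ℝ := ![-1 / 2, 0]

open Matrix

-- `D = 𝟙 (2, -1)ᵀ` has rank one, so `D v = 0` exactly when `v` is a multiple of `(1, 2)ᵀ`.
theorem Di23_mulVec (a b : ℝ) : Di23 *ᵥ ![a, b] = fun _ => 2 * a - b := by
  funext i; fin_cases i <;> simp [Di23] <;> ring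

theorem Di23_mulVec_eq_zero {a b : ℝ} (h : b = 2 * a) : Di23 *ᵥ ![a, b] = 0 := by
  rw [Di23_mulVec, h]; funext; simp

theorem tauVec_iEIS23_zero : tauVec 2 Di23 Ai23 Ri23 ci23 0 = 0 := by
  funext i; fin_cases i <;> simp [tauVec, Di23, dotProduct] <;> norm_num

theorem tauVec_iEIS23_one : tauVec 2 Di23 Ai23 Ri23 ci23 1 = 0 := by
  funext i; fin_cases i <;>
    simp [tauVec, Di23, Ai23, Ri23, ci23, dotProduct, Fin.sum_univ_two, vecHead, vecTail,
      Nat.factorial] <;> norm_num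

theorem tauVec_iEIS23_two : tauVec 2 Di23 Ai23 Ri23 ci23 2 = ![3 / 8, 3 / 4] := by
  funext i; fin_cases i <;>
    simp [tauVec, Di23, Ai23, Ri23, ci23, dotProduct, Fin.sum_univ_two, vecHead, vecTail,
      Nat.factorial] <;> norm_num

theorem tauVec_iEIS23_three : tauVec 2 Di23 Ai23 Ri23 ci23 3 = ![-5 / 48, -5 / 24] := by
  funext i; fin_cases i <;>
    simp [tauVec, Di23, Ai23, Ri23, ci23, dotProduct, Fin.sum_univ_two, vecHead, vecTail,
      Nat.factorial] <;> norm_num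

theorem Ai23_add_Ri23_mulVec_tauVec_two :
    (Ai23 + Ri23) *ᵥ ![3 / 8, 3 / 4] = ![1 / 8, 1 / 4] := by
  funext i; fin_cases i <;> simp [Ai23, Ri23] <;> norm_num

/-- **The A-stable implicit method iEIS+(2,3) satisfies the order conditions with `p = 1`
and the EIS+ conditions**: `τ₀ = τ₁ = 0`, `Dτ₂ = 0`, `Dτ₃ = 0`, `D(A+R)τ₂ = 0`; moreover
`τ₂ = (3/8, 3/4)ᵀ`. -/
theorem iEIS23_conditions :
    tauVec 2 Di23 Ai23 Ri23 ci23 0 = 0 ∧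
    tauVec 2 Di23 Ai23 Ri23 ci23 1 = 0 ∧
    Di23.mulVec (tauVec 2 Di23 Ai23 Ri23 ci23 2) = 0 ∧
    Di23.mulVec (tauVec 2 Di23 Ai23 Ri23 ci23 3) = 0 ∧
    Di23.mulVec ((Ai23 + Ri23).mulVec (tauVec 2 Di23 Ai23 Ri23 ci23 2)) = 0 ∧
    tauVec 2 Di23 Ai23 Ri23 ci23 2 = ![3 / 8, 3 / 4] := by
  rw [tauVec_iEIS23_three, tauVec_iEIS23_two, Ai23_add_Ri23_mulVec_tauVec_two]
  exact ⟨tauVec_iEIS23_zero, tauVec_iEIS23_one, Di23_mulVec_eq_zero (by norm_num),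
    Di23_mulVec_eq_zero (by norm_num), Di23_mulVec_eq_zero (by norm_num), rfl⟩
end

section
/- Consider the post-processing weights w = (4/15, −4/5, 4/5, 11/15) at the nodes x = (−3/2, −1, −1/2, 0) and the concatenated truncation vector τ̃ = (31/120, 62/15, 31/120, 62/15) of the parallel-efficient implicit method iEIS+(2,3). Then: (a) for every real polynomial q of degree at most 2, Σ_{i=1}^{4} w_i · q(x_i) = q(0) (equivalently Σ w_i = 1, Σ w_i x_i = 0, Σ w_i x_i² = 0); and (b) Σ_{i=1}^{4} w_i · τ̃_i = 0. Consequently, the post-processed value v̂ⁿ = (4/15)v^{n−3/2} − (4/5)v^{n−1} + (4/5)v^{n−1/2} + (11/15)v^{n} reproduces exactly, at time t_n, any function whose grid values are a polynomial of degree ≤ 2 in (t − t_n)/Δt, while annihilating the leading error direction τ̃. -/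
/-!
By linearity in `q`, exactness on polynomials of degree at most `2` reduces to the moment
conditions on the monomials `1, x, x²`; those and the annihilation of `τ̃` are finite
rational computations.
-/

open Polynomial Finset

theorem sum_mul_eval_eq_eval_of_moments {R ι : Type*} [CommRing R] (s : Finset ι) (w x : ι → R)
    (a : R) {n : ℕ} (hmoment : ∀ k ≤ n, ∑ i ∈ s, w i * x i ^ k = a ^ k)
    (q : R[X]) (hq : q.natDegree ≤ n) :
    ∑ i ∈ s, w i * q.eval (x i) = q.eval a := by
  have hlt : q.natDegree < n + 1 := Nat.lt_succ_of_le hq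
  simp_rw [eval_eq_sum_range' hlt, mul_sum]
  rw [sum_comm]
  refine sum_congr rfl fun k hk => ?_
  rw [← hmoment k (Nat.lt_succ_iff.mp (mem_range.mp hk)), mul_sum]
  exact sum_congr rfl fun i _ => by ring

/-- **Properties of the post-processor of the parallel-efficient implicit method iEIS+(2,3).**
The weights `w = (4/15, -4/5, 4/5, 11/15)` at the nodes `x = (-3/2, -1, -1/2, 0)` reproduce
the value at `0` of every polynomial of degree at most `2` (equivalently `∑wᵢ = 1`,
`∑wᵢxᵢ = 0`, `∑wᵢxᵢ² = 0`), and annihilate the concatenated truncation vector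
`τ̃ = (31/120, 62/15, 31/120, 62/15)`. -/
theorem iEIS23_parallel_postprocessor_properties :
    (∀ q : Polynomial ℝ, q.degree ≤ 2 →
      ∑ i : Fin 4, (![4 / 15, -4 / 5, 4 / 5, 11 / 15] : Fin 4 → ℝ) i *
        q.eval ((![-3 / 2, -1, -1 / 2, 0] : Fin 4 → ℝ) i) = q.eval 0) ∧
    (∑ i : Fin 4, (![4 / 15, -4 / 5, 4 / 5, 11 / 15] : Fin 4 → ℝ) i = 1) ∧
    (∑ i : Fin 4, (![4 / 15, -4 / 5, 4 / 5, 11 / 15] : Fin 4 → ℝ) i *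
      (![-3 / 2, -1, -1 / 2, 0] : Fin 4 → ℝ) i = 0) ∧
    (∑ i : Fin 4, (![4 / 15, -4 / 5, 4 / 5, 11 / 15] : Fin 4 → ℝ) i *
      ((![-3 / 2, -1, -1 / 2, 0] : Fin 4 → ℝ) i) ^ 2 = 0) ∧
    (∑ i : Fin 4, (![4 / 15, -4 / 5, 4 / 5, 11 / 15] : Fin 4 → ℝ) i *
      (![31 / 120, 62 / 15, 31 / 120, 62 / 15] : Fin 4 → ℝ) i = 0) := by
  set w : Fin 4 → ℝ := ![4 / 15, -4 / 5, 4 / 5, 11 / 15]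
  set x : Fin 4 → ℝ := ![-3 / 2, -1, -1 / 2, 0]
  have hsum : ∑ i, w i = 1 := by norm_num [w, Fin.sum_univ_succ]
  have hfirst : ∑ i, w i * x i = 0 := by norm_num [w, x, Fin.sum_univ_succ]
  have hsecond : ∑ i, w i * x i ^ 2 = 0 := by norm_num [w, x, Fin.sum_univ_succ]
  have hmoment : ∀ k ≤ 2, ∑ i, w i * x i ^ k = (0 : ℝ) ^ k := by
    intro k hk
    interval_cases k <;> simpa
  refine ⟨fun q hq => ?_, hsum, hfirst, hsecond, ?_⟩
  · exact sum_mul_eval_eq_eval_of_moments _ w x 0 hmoment q (natDegree_le_iff_degree_le.mpr hq)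
  · norm_num [w, Fin.sum_univ_succ]
end
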